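/- For β ∈ ℤ₊ⁿ and α ∈ ℤ, the monomial z^α w₁^{β₁}⋯w_n^{β_n} is square-integrable on ℋ_k if and only if 2α + 2k|β| + 2kn + 2 > 0, i.e. α + k(|β| + n) > −1. -/

import Mathlib

open MeasureTheory Finset Set Metric
open scoped ENNReal

lemma lintegral_norm_addHaar {E : Type*} [NormedAddCommGroup E] [NormedSpace ℝ E]
    [MeasurableSpace E] [BorelSpace E] [FiniteDimensional ℝ E] [Nontrivial E]
    (μ : Measure E) [μ.IsAddHaarMeasure] (g : ℝ → ℝ≥0∞) (hg : Measurable g) :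
    ∫⁻ x, g ‖x‖ ∂μ = μ.toSphere univ *
      ∫⁻ y in Ioi (0:ℝ), ENNReal.ofReal (y ^ (Module.finrank ℝ E - 1)) * g y := by
  have h1 : ∫⁻ x, g ‖x‖ ∂μ = ∫⁻ x : ({(0:E)}ᶜ : Set E), g ‖x.1‖ ∂(μ.comap (↑)) := by
    rw [lintegral_subtype_comap (measurableSet_singleton (0:E)).compl (fun x => g ‖x‖),
      restrict_compl_singleton]
  rw [h1]
  have h2 := (μ.measurePreserving_homeomorphUnitSphereProd).lintegral_comp
    (f := fun p : sphere (0:E) 1 × Ioi (0:ℝ) => g p.2.1)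
    ((hg.comp measurable_subtype_coe).comp measurable_snd)
  have h3 : ∀ x : ({(0:E)}ᶜ : Set E), g ‖x.1‖ =
      (fun p : sphere (0:E) 1 × Ioi (0:ℝ) => g p.2.1) (homeomorphUnitSphereProd E x) := by
    intro x; simp
  calc ∫⁻ x : ({(0:E)}ᶜ : Set E), g ‖x.1‖ ∂(μ.comap (↑))
      = ∫⁻ p : sphere (0:E) 1 × Ioi (0:ℝ), g p.2.1
          ∂(μ.toSphere.prod (.volumeIoiPow (Module.finrank ℝ E - 1))) := by
        rw [← h2]; exact lintegral_congr h3
    _ = μ.toSphere univ * ∫⁻ y : Ioi (0:ℝ), g y.1 ∂(Measure.volumeIoiPow (Module.finrank ℝ E - 1)) := by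
        rw [lintegral_prod (fun p : sphere (0:E) 1 × Ioi (0:ℝ) => g p.2.1)
          (((hg.comp measurable_subtype_coe).comp measurable_snd).aemeasurable)]
        simp [lintegral_const, mul_comm]
    _ = μ.toSphere univ * ∫⁻ y in Ioi (0:ℝ), ENNReal.ofReal (y ^ (Module.finrank ℝ E - 1)) * g y := by
        congr 1
        rw [Measure.volumeIoiPow, lintegral_withDensity_eq_lintegral_mul _
          (f := fun r : Ioi (0:ℝ) => ENNReal.ofReal (r.1 ^ (Module.finrank ℝ E - 1)))
          (by fun_prop) (g := fun y : Ioi (0:ℝ) => g y.1) (hg.comp measurable_subtype_coe),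
          ← lintegral_subtype_comap measurableSet_Ioi
            (fun y : ℝ => ENNReal.ofReal (y ^ (Module.finrank ℝ E - 1)) * g y)]
        rfl

lemma aux_mul_lt_top_iff {c x : ℝ≥0∞} (h0 : c ≠ 0) (ht : c ≠ ∞) : c * x < ∞ ↔ x < ∞ := by
  rw [ENNReal.mul_lt_top_iff]
  simp only [ht.lt_top, true_and, h0, false_or]
  constructor
  · rintro (h | h)
    · exact h
    · simp [h]
  · exact Or.inl

lemma lintegral_ball_zpow (t : ℤ) :
    (∫⁻ z : ℂ, (if ‖z‖ < 1 then ENNReal.ofReal (‖z‖ ^ t) else 0)) < ∞ ↔ -2 < t := by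
  set g : ℝ → ℝ≥0∞ := fun y => if y < 1 then ENNReal.ofReal (y ^ t) else 0 with hgdef
  have hzpow : Measurable fun y : ℝ => y ^ t := by
    rcases t with m | m
    · simpa using (measurable_id.pow_const m)
    · simpa [zpow_negSucc] using ((measurable_id.pow_const (m+1)) : Measurable fun y : ℝ => y ^ (m+1))
  have hg : Measurable g := Measurable.ite measurableSet_Iio (by fun_prop) measurable_const
  rw [show (∫⁻ z : ℂ, (if ‖z‖ < 1 then ENNReal.ofReal (‖z‖ ^ t) else 0)) = ∫⁻ z : ℂ, g ‖z‖ from rfl,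
    lintegral_norm_addHaar volume g hg]
  have hfr : Module.finrank ℝ ℂ - 1 = 1 := by rw [Complex.finrank_real_complex]
  rw [hfr]
  have hc0 : (volume : Measure ℂ).toSphere univ ≠ 0 := by
    rw [Measure.toSphere_apply_univ]
    exact mul_ne_zero (by simp [Complex.finrank_real_complex])
      (measure_ball_pos volume (0:ℂ) one_pos).ne'
  have hcT : (volume : Measure ℂ).toSphere univ ≠ ∞ := by
    rw [Measure.toSphere_apply_univ]
    exact (ENNReal.mul_lt_top (by simp) measure_ball_lt_top).ne
  rw [aux_mul_lt_top_iff hc0 hcT]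
  have hpt : ∀ y : ℝ, y ∈ Ioi (0:ℝ) → ENNReal.ofReal (y ^ 1) * g y
      = (Set.Iio 1).indicator (fun a => ENNReal.ofReal (a ^ (t + 1))) y := by
    intro y hy
    have hy0 : (0:ℝ) < y := hy
    simp only [hgdef, pow_one]
    by_cases h1 : y < 1
    · rw [if_pos h1, Set.indicator_of_mem (Set.mem_Iio.2 h1), ← ENNReal.ofReal_mul hy0.le,
        zpow_add_one₀ hy0.ne', mul_comm]
    · rw [if_neg h1, Set.indicator_of_notMem (by simpa using h1), mul_zero]
  have hstep : (∫⁻ y in Ioi (0:ℝ), ENNReal.ofReal (y ^ 1) * g y)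
      = ∫⁻ y in Ioo (0:ℝ) 1, ENNReal.ofReal (y ^ (t+1)) := by
    rw [setLIntegral_congr_fun measurableSet_Ioi hpt,
      lintegral_indicator measurableSet_Iio, Measure.restrict_restrict measurableSet_Iio,
      Set.Iio_inter_Ioi]
  rw [hstep]
  have hm : AEStronglyMeasurable (fun y : ℝ => y ^ (((t+1 : ℤ)):ℝ))
      (volume.restrict (Ioo (0:ℝ) 1)) :=
    (Measurable.aestronglyMeasurable (by fun_prop))
  have hnn : 0 ≤ᵐ[volume.restrict (Ioo (0:ℝ) 1)] fun y : ℝ => y ^ (((t+1 : ℤ)):ℝ) :=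
    (ae_restrict_mem measurableSet_Ioo).mono fun y hy => Real.rpow_nonneg hy.1.le _
  have hEq : (∫⁻ y in Ioo (0:ℝ) 1, ENNReal.ofReal (y ^ (t+1)))
      = ∫⁻ y in Ioo (0:ℝ) 1, ENNReal.ofReal (y ^ (((t+1 : ℤ)):ℝ)) := by
    simp only [Real.rpow_intCast]
  have hiff := intervalIntegral.integrableOn_Ioo_rpow_iff (s := (((t+1 : ℤ)):ℝ)) (one_pos)
  rw [hEq, ← hasFiniteIntegral_iff_ofReal hnn]
  constructor
  · intro h
    have : IntegrableOn (fun y : ℝ => y ^ (((t+1 : ℤ)):ℝ)) (Ioo (0:ℝ) 1) := ⟨hm, h⟩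
    have := hiff.1 this
    push_cast at this
    exact_mod_cast (by linarith : (-2 : ℝ) < (t:ℝ))
  · intro h
    have : (-1 : ℝ) < ((t+1 : ℤ):ℝ) := by push_cast; exact_mod_cast (by linarith [(show (-2:ℝ) < (t:ℝ) from by exact_mod_cast h)] : (-1:ℝ) < (t:ℝ)+1)
    exact (hiff.2 this).2

/-- The Euclidean-type ball in `Fin n → ℂ`. -/
def Sball (n : ℕ) (r : ℝ) : Set (Fin n → ℂ) := {w | ∑ j, ‖w j‖^2 < r^2}

lemma Sball_measurable (n : ℕ) (r : ℝ) : MeasurableSet (Sball n r) :=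
  measurableSet_lt (by fun_prop) measurable_const

lemma G_measurable (n : ℕ) (β : Fin n → ℕ) :
    Measurable fun w : Fin n → ℂ => ENNReal.ofReal (∏ j, ‖w j‖ ^ (2*β j)) := by fun_prop

lemma smul_mem_Sball_iff {n : ℕ} {r : ℝ} (hr : 0 < r) (w : Fin n → ℂ) :
    (r : ℝ) • w ∈ Sball n r ↔ w ∈ Sball n 1 := by
  simp only [Sball, Set.mem_setOf_eq, Pi.smul_apply, norm_smul, Real.norm_eq_abs,
    abs_of_pos hr, mul_pow, ← Finset.mul_sum, one_pow]
  rw [mul_lt_iff_lt_one_right (by positivity)]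

lemma sball_scaling (n : ℕ) (β : Fin n → ℕ) {r : ℝ} (hr : 0 < r) :
    (∫⁻ w in Sball n r, ENNReal.ofReal (∏ j, ‖w j‖ ^ (2*β j)))
      = ENNReal.ofReal (r ^ (2*(∑ j, β j) + 2*n)) *
        ∫⁻ w in Sball n 1, ENNReal.ofReal (∏ j, ‖w j‖ ^ (2*β j)) := by
  set G : (Fin n → ℂ) → ℝ≥0∞ := fun w => ENNReal.ofReal (∏ j, ‖w j‖ ^ (2*β j)) with hGdef
  have hGm : Measurable G := G_measurable n β
  have hd : Module.finrank ℝ (Fin n → ℂ) = 2*n := by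
    rw [Module.finrank_pi_fintype]; simp [Complex.finrank_real_complex, mul_comm]
  have hmap := Measure.map_addHaar_smul (volume : Measure (Fin n → ℂ)) hr.ne'
  have hs : Measurable fun w : Fin n → ℂ => r • w := measurable_const_smul r
  have h1 : ∫⁻ w, (Sball n r).indicator G w ∂(Measure.map (fun w : Fin n → ℂ => r • w) volume)
      = ∫⁻ w, (Sball n r).indicator G (r • w) := by
    rw [lintegral_map (hGm.indicator (Sball_measurable n r)) hs]
  have hpt : ∀ w : Fin n → ℂ, (Sball n r).indicator G (r • w)
      = ENNReal.ofReal (r ^ (2*(∑ j, β j))) * (Sball n 1).indicator G w := by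
    intro w
    by_cases hw : w ∈ Sball n 1
    · rw [Set.indicator_of_mem ((smul_mem_Sball_iff hr w).2 hw), Set.indicator_of_mem hw, hGdef]
      simp only
      rw [← ENNReal.ofReal_mul (by positivity)]
      congr 1
      rw [Finset.mul_sum, ← Finset.prod_pow_eq_pow_sum, ← Finset.prod_mul_distrib]
      refine Finset.prod_congr rfl fun j _ => ?_
      rw [Pi.smul_apply, norm_smul, Real.norm_eq_abs, abs_of_pos hr, mul_pow]
    · rw [Set.indicator_of_notMem (fun h => hw ((smul_mem_Sball_iff hr w).1 h)),
        Set.indicator_of_notMem hw, mul_zero]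
  have h2 : ENNReal.ofReal ((r ^ (2*n))⁻¹) * ∫⁻ w, (Sball n r).indicator G w
      = ENNReal.ofReal (r ^ (2*(∑ j, β j))) * ∫⁻ w, (Sball n 1).indicator G w := by
    rw [← lintegral_const_mul _ (hGm.indicator (Sball_measurable n 1)),
      ← smul_eq_mul (ENNReal.ofReal ((r ^ (2*n))⁻¹)), ← lintegral_smul_measure]
    rw [← funext hpt, ← h1, hmap, hd]
    congr 2
    rw [abs_of_pos (by positivity)]
  have ha0 : ENNReal.ofReal (r ^ (2*n)) ≠ 0 := by positivity
  have haT : ENNReal.ofReal (r ^ (2*n)) ≠ ∞ := ENNReal.ofReal_ne_top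
  have h3 : (∫⁻ w, (Sball n r).indicator G w)
      = ENNReal.ofReal (r ^ (2*n)) * (ENNReal.ofReal (r ^ (2*(∑ j, β j))) *
        ∫⁻ w, (Sball n 1).indicator G w) := by
    rw [← h2, ← mul_assoc, ← ENNReal.ofReal_mul (by positivity), mul_inv_cancel₀ (by positivity),
      ENNReal.ofReal_one, one_mul]
  rw [← lintegral_indicator (Sball_measurable n r), ← lintegral_indicator (Sball_measurable n 1),
    h3, ← mul_assoc, ← ENNReal.ofReal_mul (by positivity), ← pow_add, add_comm (2*n)]

lemma C_lt_top (n : ℕ) (β : Fin n → ℕ) :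
    (∫⁻ w in Sball n 1, ENNReal.ofReal (∏ j, ‖w j‖ ^ (2*β j))) < ∞ := by
  have hle : ∀ w ∈ Sball n 1, ∀ j, ‖w j‖ < 1 := by
    intro w hw j
    have h1 : ∑ i, ‖w i‖^2 < 1 := by simpa [Sball] using hw
    have h2 : ‖w j‖^2 < 1 :=
      lt_of_le_of_lt (Finset.single_le_sum (fun i _ => sq_nonneg ‖w i‖) (Finset.mem_univ j)) h1
    nlinarith [norm_nonneg (w j)]
  calc (∫⁻ w in Sball n 1, ENNReal.ofReal (∏ j, ‖w j‖ ^ (2*β j)))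
      ≤ ∫⁻ _ in Sball n 1, 1 := by
        refine setLIntegral_mono' (Sball_measurable n 1) fun w hw => ?_
        refine ENNReal.ofReal_le_one.2 (Finset.prod_le_one (fun j _ => by positivity)
          (fun j _ => pow_le_one₀ (norm_nonneg _) (hle w hw j).le))
    _ = volume (Sball n 1) := setLIntegral_one _
    _ ≤ volume (Metric.ball (0 : Fin n → ℂ) 1) := by
        refine measure_mono fun w hw => ?_
        rw [Metric.mem_ball, dist_zero_right]
        exact (pi_norm_lt_iff one_pos).2 fun j => hle w hw j
    _ < ∞ := measure_ball_lt_top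

lemma C_pos (n : ℕ) (β : Fin n → ℕ) :
    0 < ∫⁻ w in Sball n 1, ENNReal.ofReal (∏ j, ‖w j‖ ^ (2*β j)) := by
  set G : (Fin n → ℂ) → ℝ≥0∞ := fun w => ENNReal.ofReal (∏ j, ‖w j‖ ^ (2*β j)) with hGdef
  have hGm : Measurable G := G_measurable n β
  rw [lintegral_pos_iff_support hGm, Measure.restrict_apply (measurableSet_support hGm)]
  have hU : volume (⋃ j, {w : Fin n → ℂ | w j = 0}) = 0 := by
    refine measure_iUnion_null fun j => ?_
    have hK : {w : Fin n → ℂ | w j = 0}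
        = (LinearMap.ker (LinearMap.proj j : (Fin n → ℂ) →ₗ[ℝ] ℂ) : Set (Fin n → ℂ)) := by
      ext w; simp [LinearMap.mem_ker]
    rw [hK]
    refine Measure.addHaar_submodule volume _ fun h => ?_
    have : (Pi.single j 1 : Fin n → ℂ) ∈ LinearMap.ker (LinearMap.proj j : (Fin n → ℂ) →ₗ[ℝ] ℂ) := by
      rw [h]; trivial
    simp [LinearMap.mem_ker] at this
  have hsub : Sball n 1 \ (⋃ j, {w : Fin n → ℂ | w j = 0}) ⊆ Function.support G ∩ Sball n 1 := by
    rintro w ⟨hw, hw2⟩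
    refine ⟨?_, hw⟩
    have hj : ∀ j, w j ≠ 0 := by
      intro j hj; exact hw2 (Set.mem_iUnion.2 ⟨j, hj⟩)
    have : 0 < ∏ j, ‖w j‖ ^ (2*β j) :=
      Finset.prod_pos fun j _ => pow_pos (norm_pos_iff.2 (hj j)) _
    simpa [hGdef, Function.mem_support] using (ENNReal.ofReal_pos.2 this).ne'
  have hSpos : 0 < volume (Sball n 1) := by
    have hopen : IsOpen (Sball n 1) :=
      isOpen_lt (by continuity) continuous_const
    exact hopen.measure_pos volume ⟨0, by simp [Sball]⟩
  calc (0:ℝ≥0∞) < volume (Sball n 1) := hSpos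
    _ = volume (Sball n 1 \ ⋃ j, {w : Fin n → ℂ | w j = 0}) := (measure_diff_null hU).symm
    _ ≤ volume (Function.support G ∩ Sball n 1) := measure_mono hsub

lemma measurable_real_zpow (t : ℤ) : Measurable fun y : ℝ => y ^ t := by
  rcases t with m | m
  · simpa using (measurable_id.pow_const m)
  · simpa [zpow_negSucc] using
      ((measurable_id.pow_const (m+1)) : Measurable fun y : ℝ => y ^ (m+1))

lemma measurable_complex_zpow (t : ℤ) : Measurable fun z : ℂ => z ^ t := by
  rcases t with m | m
  · simpa using (measurable_id.pow_const m)
  · simpa [zpow_negSucc] using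
      ((measurable_id.pow_const (m+1)) : Measurable fun z : ℂ => z ^ (m+1))

def HartogsK' (n k : ℕ) : Set (ℂ × (Fin n → ℂ)) :=
  {p | ∑ j, ‖p.2 j‖ ^ 2 < ‖p.1‖ ^ (2 * k) ∧ ‖p.1‖ ^ (2 * k) < 1}

lemma HartogsK'_measurable (n k : ℕ) : MeasurableSet (HartogsK' n k) := by
  have : HartogsK' n k = {p : ℂ × (Fin n → ℂ) | ∑ j, ‖p.2 j‖ ^ 2 < ‖p.1‖ ^ (2 * k)}
      ∩ {p : ℂ × (Fin n → ℂ) | ‖p.1‖ ^ (2 * k) < 1} := rfl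
  rw [this]
  exact (measurableSet_lt (by fun_prop) (by fun_prop)).inter
    (measurableSet_lt (by fun_prop) measurable_const)

lemma main_calc (n k : ℕ) (hk : 1 ≤ k) (α : ℤ) (β : Fin n → ℕ) :
    (∫⁻ q in HartogsK' n k, ENNReal.ofReal (‖q.1 ^ α * ∏ j, q.2 j ^ β j‖^2))
      = (∫⁻ z : ℂ, (if ‖z‖ < 1 then
          ENNReal.ofReal (‖z‖ ^ (2*α + (k*(2*(∑ j, β j) + 2*n) : ℕ))) else 0)) *
        ∫⁻ w in Sball n 1, ENNReal.ofReal (∏ j, ‖w j‖ ^ (2*β j)) := by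
  set G : (Fin n → ℂ) → ℝ≥0∞ := fun w => ENNReal.ofReal (∏ j, ‖w j‖ ^ (2*β j)) with hGdef
  have hGm : Measurable G := G_measurable n β
  set C := ∫⁻ w in Sball n 1, G w with hCdef
  set t : ℤ := 2*α + (k*(2*(∑ j, β j) + 2*n) : ℕ) with htdef
  set Φ : ℂ × (Fin n → ℂ) → ℝ≥0∞ :=
    fun q => ENNReal.ofReal (‖q.1‖ ^ (2*α)) * G q.2 with hΦdef
  have hΦm : Measurable Φ := by
    refine Measurable.mul ?_ (hGm.comp measurable_snd)
    exact (ENNReal.measurable_ofReal.comp ((measurable_real_zpow (2*α)).comp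
      (measurable_norm.comp measurable_fst)))
  have hH := HartogsK'_measurable n k
  -- Step A: pointwise rewrite on H
  have stepA : (∫⁻ q in HartogsK' n k, ENNReal.ofReal (‖q.1 ^ α * ∏ j, q.2 j ^ β j‖^2))
      = ∫⁻ q in HartogsK' n k, Φ q := by
    refine setLIntegral_congr_fun hH (fun q hq => ?_)
    have hz : q.1 ≠ 0 := by
      intro h0
      have h1 := hq.1
      rw [h0] at h1
      simp only [norm_zero] at h1
      rw [zero_pow (by omega)] at h1
      have : (0:ℝ) ≤ ∑ j, ‖q.2 j‖ ^ 2 := by positivity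
      linarith
    have hzn : ‖q.1‖ ≠ 0 := norm_ne_zero_iff.2 hz
    have hreal : ‖q.1 ^ α * ∏ j, q.2 j ^ β j‖^2
        = ‖q.1‖ ^ (2*α) * ∏ j, ‖q.2 j‖ ^ (2*β j) := by
      rw [norm_mul, norm_zpow, norm_prod, mul_pow, sq (‖q.1‖ ^ α), ← zpow_add₀ hzn, ← two_mul,
        ← Finset.prod_pow]
      congr 1
      refine Finset.prod_congr rfl fun j _ => ?_
      rw [norm_pow, ← pow_mul, mul_comm (β j) 2]
    rw [hreal, ENNReal.ofReal_mul (zpow_nonneg (norm_nonneg _) _)]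
  rw [stepA, ← lintegral_indicator hH, Measure.volume_eq_prod,
    lintegral_prod _ ((hΦm.indicator hH).aemeasurable)]
  -- Step D: inner integral
  have hinner : ∀ z : ℂ, (∫⁻ w, (HartogsK' n k).indicator Φ (z, w))
      = if ‖z‖^(2*k) < 1 then ENNReal.ofReal (‖z‖^(2*α)) * ∫⁻ w in Sball n (‖z‖^k), G w
        else 0 := by
    intro z
    have hpow : (‖z‖^k)^2 = ‖z‖^(2*k) := by rw [← pow_mul, mul_comm]
    have hpt : ∀ w, (HartogsK' n k).indicator Φ (z, w)
        = if ‖z‖^(2*k) < 1 then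
            (Sball n (‖z‖^k)).indicator (fun w => ENNReal.ofReal (‖z‖^(2*α)) * G w) w
          else 0 := by
      intro w
      by_cases h1 : ‖z‖^(2*k) < 1
      · rw [if_pos h1]
        by_cases h2 : w ∈ Sball n (‖z‖^k)
        · have hmem : (z, w) ∈ HartogsK' n k := by
            refine ⟨?_, h1⟩
            have := h2
            rw [Sball, Set.mem_setOf_eq, hpow] at this
            exact this
          rw [Set.indicator_of_mem hmem, Set.indicator_of_mem h2]
        · have hmem : (z, w) ∉ HartogsK' n k := by
            intro hmem
            exact h2 (by rw [Sball, Set.mem_setOf_eq, hpow]; exact hmem.1)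
          rw [Set.indicator_of_notMem hmem, Set.indicator_of_notMem h2]
      · rw [if_neg h1]
        have hmem : (z, w) ∉ HartogsK' n k := fun hmem => h1 hmem.2
        rw [Set.indicator_of_notMem hmem]
    rw [lintegral_congr hpt]
    split_ifs with h1
    · rw [lintegral_indicator (Sball_measurable _ _), lintegral_const_mul _ hGm]
    · simp
  rw [lintegral_congr hinner]
  -- Step E: a.e. identification of the outer integrand
  have h0 : ∀ᵐ z : ℂ, z ≠ 0 := by
    rw [ae_iff]
    simpa using measure_singleton (0:ℂ)
  have hae : ∀ᵐ z : ℂ, (if ‖z‖^(2*k) < 1 then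
      ENNReal.ofReal (‖z‖^(2*α)) * ∫⁻ w in Sball n (‖z‖^k), G w else 0)
      = (if ‖z‖ < 1 then ENNReal.ofReal (‖z‖ ^ t) else 0) * C := by
    filter_upwards [h0] with z hz
    have hzn : 0 < ‖z‖ := norm_pos_iff.2 hz
    have hiff : ‖z‖^(2*k) < 1 ↔ ‖z‖ < 1 :=
      pow_lt_one_iff_of_nonneg (norm_nonneg z) (by omega)
    by_cases h : ‖z‖ < 1
    · rw [if_pos (hiff.2 h), if_pos h, sball_scaling n β (pow_pos hzn k), ← pow_mul,
        ← mul_assoc, ← ENNReal.ofReal_mul (zpow_nonneg (norm_nonneg z) _),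
        ← zpow_natCast ‖z‖ (k*(2*(∑ j, β j) + 2*n)), ← zpow_add₀ hzn.ne', htdef]
    · rw [if_neg (fun hh => h (hiff.1 hh)), if_neg h, zero_mul]
  rw [lintegral_congr_ae hae, lintegral_mul_const]
  exact Measurable.ite (measurableSet_lt measurable_norm measurable_const)
    (ENNReal.measurable_ofReal.comp ((measurable_real_zpow t).comp measurable_norm))
    measurable_const

/-- The generalized Hartogs triangle `ℋ_k ⊂ ℂ^{1+n}`. -/
def HartogsK (n k : ℕ) : Set (ℂ × (Fin n → ℂ)) :=
  {p | ∑ j, ‖p.2 j‖ ^ 2 < ‖p.1‖ ^ (2 * k) ∧ ‖p.1‖ ^ (2 * k) < 1}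

/-- For `α ∈ ℤ`, `β ∈ ℤ₊ⁿ`, the monomial `z^α w^β` lies in `L²(ℋ_k)` iff
`2α + 2k|β| + 2kn + 2 > 0`. -/
theorem monomial_memL2_HartogsK (n k : ℕ) (hn : 1 ≤ n) (hk : 1 ≤ k) (α : ℤ) (β : Fin n → ℕ) :
    MemLp (fun q : ℂ × (Fin n → ℂ) => q.1 ^ α * ∏ j, q.2 j ^ β j) 2
        (volume.restrict (HartogsK n k)) ↔
      0 < 2 * α + 2 * k * (∑ j, (β j : ℤ)) + 2 * k * n + 2 := by
  have hHeq : HartogsK n k = HartogsK' n k := rfl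
  set f : ℂ × (Fin n → ℂ) → ℂ := fun q => q.1 ^ α * ∏ j, q.2 j ^ β j with hfdef
  have hfm : Measurable f := by
    refine Measurable.mul ((measurable_complex_zpow α).comp measurable_fst) ?_
    exact Finset.measurable_prod _ fun j _ =>
      ((measurable_pi_apply j).comp measurable_snd).pow_const (β j)
  rw [memLp_two_iff_integrable_sq_norm (hfm.aestronglyMeasurable)]
  have hAESM2 : AEStronglyMeasurable (fun q => ‖f q‖^2)
      (volume.restrict (HartogsK n k)) :=
    (hfm.norm.pow_const 2).aestronglyMeasurable
  have hint : Integrable (fun q => ‖f q‖^2) (volume.restrict (HartogsK n k))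
      ↔ HasFiniteIntegral (fun q => ‖f q‖^2) (volume.restrict (HartogsK n k)) :=
    ⟨fun h => h.2, fun h => ⟨hAESM2, h⟩⟩
  rw [hint, hasFiniteIntegral_iff_ofReal (ae_of_all _ fun q => sq_nonneg _)]
  have : (∫⁻ q, ENNReal.ofReal (‖f q‖^2) ∂(volume.restrict (HartogsK n k)))
      = ∫⁻ q in HartogsK' n k, ENNReal.ofReal (‖q.1 ^ α * ∏ j, q.2 j ^ β j‖^2) := by
    rw [hHeq]
  rw [this, main_calc n k hk α β, mul_comm,
    aux_mul_lt_top_iff (C_pos n β).ne' (C_lt_top n β).ne, lintegral_ball_zpow]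
  push_cast
  constructor <;> intro h <;> linarith
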